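/- For pairwise independent events E_1,...,E_m in a probability space, P(⋃_i E_i) ≥ (1/2)·min{1, Σ_i P(E_i)}. -/

import Mathlib

/-!
Let `N = ∑ i, 𝟙_{E i}` count the events that occur and `s = ∑ i, μ (E i)`. Then `∫ N = s`, and
pairwise independence gives `∫ N² = ∑ i, ∑ j, μ (E i ∩ E j) ≤ s + s²`. Since `N` vanishes off
`⋃ i, E i`, Cauchy–Schwarz against the indicator of the union gives `s² ≤ (s + s²) μ (⋃ i, E i)`,
i.e. `μ (⋃ i, E i) ≥ s / (1 + s) ≥ ½ min 1 s`.
-/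

open MeasureTheory
open scoped ENNReal

theorem ENNReal.half_min_one_le_of_sq_le_add_sq_mul {s a : ℝ≥0∞} (hs : s ≠ ⊤)
    (h : s ^ 2 ≤ (s + s ^ 2) * a) : 1 / 2 * min 1 s ≤ a := by
  rcases eq_or_ne a ⊤ with rfl | ha
  · exact le_top
  lift s to NNReal using hs
  lift a to NNReal using ha
  have h' : (s : ℝ) ^ 2 ≤ (s + s ^ 2) * a := by exact_mod_cast h
  have key : (1 / 2 * min 1 s : NNReal) ≤ a := by
    rw [← NNReal.coe_le_coe]
    push_cast
    rcases le_total (s : ℝ) 1 with hs1 | hs1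
    · rw [min_eq_right hs1]; nlinarith [s.2, a.2]
    · rw [min_eq_left hs1]; nlinarith [s.2, a.2]
  calc 1 / 2 * min 1 (s : ℝ≥0∞) = ((1 / 2 * min 1 s : NNReal) : ℝ≥0∞) := by
        push_cast; simp
    _ ≤ a := by exact_mod_cast key

namespace MeasureTheory

variable {Ω ι : Type*}

theorem sq_lintegral_le_lintegral_sq_mul_measure [MeasurableSpace Ω] {μ : Measure Ω}
    {f : Ω → ℝ≥0∞} {A : Set Ω} (hf : AEMeasurable f μ) (hA : MeasurableSet A)
    (hfA : Function.support f ⊆ A) :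
    (∫⁻ ω, f ω ∂μ) ^ 2 ≤ (∫⁻ ω, f ω ^ 2 ∂μ) * μ A := by
  have hfg : f = f * A.indicator 1 := by
    ext ω
    by_cases hω : ω ∈ A
    · simp [hω]
    · simp [hω, Function.notMem_support.1 fun h => hω (hfA h)]
  have hg : ∀ ω, A.indicator (1 : Ω → ℝ≥0∞) ω ^ 2 = A.indicator 1 ω := fun ω => by
    by_cases hω : ω ∈ A <;> simp [hω]
  have holder := ENNReal.lintegral_mul_le_Lp_mul_Lq μ Real.HolderConjugate.two_two hf
    (aemeasurable_one.indicator hA : AEMeasurable (A.indicator 1) μ)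
  simp only [← hfg, ENNReal.rpow_two, hg, lintegral_indicator_one hA] at holder
  calc (∫⁻ ω, f ω ∂μ) ^ 2 ≤ ((∫⁻ ω, f ω ^ 2 ∂μ) ^ (1 / 2 : ℝ) * μ A ^ (1 / 2 : ℝ)) ^ 2 := by
        gcongr
    _ = (∫⁻ ω, f ω ^ 2 ∂μ) * μ A := by
        rw [← ENNReal.mul_rpow_of_nonneg _ _ (by norm_num), ← ENNReal.rpow_natCast,
          ← ENNReal.rpow_mul]
        norm_num

section eventCount

variable [Fintype ι]

noncomputable def eventCount (E : ι → Set Ω) (ω : Ω) : ℝ≥0∞ := ∑ i, (E i).indicator 1 ω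

theorem support_eventCount_subset (E : ι → Set Ω) :
    Function.support (eventCount E) ⊆ ⋃ i, E i := by
  intro ω hω
  obtain ⟨i, -, hi⟩ := Finset.exists_ne_zero_of_sum_ne_zero hω
  exact Set.mem_iUnion.2 ⟨i, Set.mem_of_indicator_ne_zero hi⟩

theorem eventCount_sq (E : ι → Set Ω) (ω : Ω) :
    eventCount E ω ^ 2 = ∑ i, ∑ j, (E i ∩ E j).indicator 1 ω := by
  simp only [eventCount, sq, Finset.sum_mul_sum, Set.inter_indicator_one]
  rfl

variable [MeasurableSpace Ω] {μ : Measure Ω} {E : ι → Set Ω}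

theorem measurable_eventCount (hE : ∀ i, MeasurableSet (E i)) : Measurable (eventCount E) :=
  Finset.measurable_sum _ fun i _ => measurable_one.indicator (hE i)

theorem lintegral_eventCount (hE : ∀ i, MeasurableSet (E i)) :
    ∫⁻ ω, eventCount E ω ∂μ = ∑ i, μ (E i) := by
  simp only [eventCount]
  rw [lintegral_finsetSum _ fun i _ => measurable_one.indicator (hE i)]
  simp [hE]

theorem lintegral_eventCount_sq (hE : ∀ i, MeasurableSet (E i)) :
    ∫⁻ ω, eventCount E ω ^ 2 ∂μ = ∑ i, ∑ j, μ (E i ∩ E j) := by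
  have hEE : ∀ i j, Measurable ((E i ∩ E j).indicator (1 : Ω → ℝ≥0∞)) := fun i j =>
    measurable_one.indicator ((hE i).inter (hE j))
  simp only [eventCount_sq]
  rw [lintegral_finsetSum _ fun i _ => Finset.measurable_sum _ fun j _ => hEE i j]
  refine Finset.sum_congr rfl fun i _ => ?_
  rw [lintegral_finsetSum _ fun j _ => hEE i j]
  exact Finset.sum_congr rfl fun j _ => lintegral_indicator_one ((hE i).inter (hE j))

theorem sum_sum_measure_inter_le_of_pairwise
    (hpind : ∀ i j, i ≠ j → μ (E i ∩ E j) = μ (E i) * μ (E j)) :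
    ∑ i, ∑ j, μ (E i ∩ E j) ≤ ∑ i, μ (E i) + (∑ i, μ (E i)) ^ 2 := by
  classical
  have hterm : ∀ i j, μ (E i ∩ E j) ≤ (if i = j then μ (E i) else 0) + μ (E i) * μ (E j) := by
    intro i j
    by_cases h : i = j
    · subst h; simp
    · simp [hpind i j h, h]
  calc ∑ i, ∑ j, μ (E i ∩ E j)
      ≤ ∑ i, ∑ j, ((if i = j then μ (E i) else 0) + μ (E i) * μ (E j)) :=
        Finset.sum_le_sum fun i _ => Finset.sum_le_sum fun j _ => hterm i j
    _ = ∑ i, μ (E i) + (∑ i, μ (E i)) ^ 2 := by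
        simp [Finset.sum_add_distrib, sq, Finset.sum_mul_sum]

end eventCount

end MeasureTheory

theorem union_ge_half_min_one_sum
    {Ω : Type*} [MeasurableSpace Ω] (μ : Measure Ω) [IsProbabilityMeasure μ]
    (m : ℕ) (E : Fin m → Set Ω) (hmeas : ∀ i, MeasurableSet (E i))
    (hpind : ∀ i j, i ≠ j → μ (E i ∩ E j) = μ (E i) * μ (E j)) :
    μ (⋃ i, E i) ≥ (1 / 2) * min 1 (∑ i, μ (E i)) := by
  set s := ∑ i, μ (E i)
  have hsecond_moment : s ^ 2 ≤ (s + s ^ 2) * μ (⋃ i, E i) :=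
    calc s ^ 2 = (∫⁻ ω, eventCount E ω ∂μ) ^ 2 := by rw [lintegral_eventCount hmeas]
      _ ≤ (∫⁻ ω, eventCount E ω ^ 2 ∂μ) * μ (⋃ i, E i) :=
        sq_lintegral_le_lintegral_sq_mul_measure (measurable_eventCount hmeas).aemeasurable
          (MeasurableSet.iUnion hmeas) (support_eventCount_subset E)
      _ ≤ (s + s ^ 2) * μ (⋃ i, E i) := by
        rw [lintegral_eventCount_sq hmeas]
        gcongr
        exact sum_sum_measure_inter_le_of_pairwise hpind
  exact ENNReal.half_min_one_le_of_sq_le_add_sq_mul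
    (ENNReal.sum_ne_top.2 fun i _ => measure_ne_top μ (E i)) hsecond_moment
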